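/- Let S ⊆ ℤ≥2 be nonempty. Suppose that every n which is an R-position in LR-Subtraction Nim with set S is a P-position in normal-play Subtraction Nim with set S. Then: (1) every P-position of LR-Subtraction Nim is a P-position of normal-play Subtraction Nim; (2) every N-position of LR-Subtraction Nim is an N-position of normal-play Subtraction Nim. -/
import Mathlib

open scoped Classical

inductive Outcome : Type
  | L | R | N | P
deriving DecidableEq

/-- Outcome determined from the set of outcomes of the options of a non-terminal position. -/
noncomputable def fromOptions (T : Set Outcome) : Outcome :=
  if Outcome.L ∈ T ∧ T ⊆ {Outcome.L, Outcome.N} then Outcome.L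
  else if Outcome.R ∈ T ∧ T ⊆ {Outcome.R, Outcome.N} then Outcome.R
  else if T = {Outcome.N} then Outcome.P
  else Outcome.N

/-- Outcome of Ending Partizan Subtraction Nim with removable set `S ⊆ ℤ≥2` and
terminal assignment `W`. -/
noncomputable def epOutcome (S : Set ℕ) (hS : ∀ s ∈ S, 2 ≤ s) (W : ℕ → Outcome) : ℕ → Outcome :=
  fun n => Nat.strongRecOn n (fun n ih =>
    if ∃ s ∈ S, s ≤ n then
      fromOptions {o | ∃ s, ∃ hs : s ∈ S, ∃ hsn : s ≤ n,
        o = ih (n - s) (by have := hS s hs; omega)}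
    else W n)

/-- Outcome of `LR`-Subtraction Nim: at a terminal position, Left wins if the number of
remaining tokens is even, Right wins if it is odd. -/
noncomputable def lrOutcome (S : Set ℕ) (hS : ∀ s ∈ S, 2 ≤ s) : ℕ → Outcome :=
  epOutcome S hS (fun n => if Even n then Outcome.L else Outcome.R)

/-- `normalN S hS n` holds iff `n` is an `N`-position of classical (normal-play)
Subtraction Nim with removable set `S`. -/
noncomputable def normalN (S : Set ℕ) (hS : ∀ s ∈ S, 2 ≤ s) : ℕ → Prop :=
  fun n => Nat.strongRecOn n (fun n ih =>
    ∃ s, ∃ hs : s ∈ S, ∃ hsn : s ≤ n, ¬ ih (n - s) (by have := hS s hs; omega))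

lemma epOutcome_eq (S : Set ℕ) (hS : ∀ s ∈ S, 2 ≤ s) (W : ℕ → Outcome) (n : ℕ) :
    epOutcome S hS W n =
      if ∃ s ∈ S, s ≤ n then
        fromOptions {o | ∃ s, ∃ _ : s ∈ S, ∃ _ : s ≤ n, o = epOutcome S hS W (n - s)}
      else W n := by
  unfold epOutcome Nat.strongRecOn
  rw [WellFounded.fix_eq]

lemma normalN_iff (S : Set ℕ) (hS : ∀ s ∈ S, 2 ≤ s) (n : ℕ) :
    normalN S hS n ↔ ∃ s, ∃ _ : s ∈ S, ∃ _ : s ≤ n, ¬ normalN S hS (n - s) := by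
  unfold normalN Nat.strongRecOn
  rw [WellFounded.fix_eq]

theorem stmt16 (S : Set ℕ) (hS : ∀ s ∈ S, 2 ≤ s) (hne : S.Nonempty)
    (hRP : ∀ n : ℕ, lrOutcome S hS n = Outcome.R → ¬ normalN S hS n) :
    (∀ n : ℕ, lrOutcome S hS n = Outcome.P → ¬ normalN S hS n) ∧
    (∀ n : ℕ, lrOutcome S hS n = Outcome.N → normalN S hS n) := by
  have key : ∀ n : ℕ,
      (lrOutcome S hS n = Outcome.P → ¬ normalN S hS n) ∧
      (lrOutcome S hS n = Outcome.N → normalN S hS n) := by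
    intro n
    induction n using Nat.strongRecOn with
    | ind n ih =>
    have hlr := epOutcome_eq S hS (fun n => if Even n then Outcome.L else Outcome.R) n
    rw [show epOutcome S hS (fun n => if Even n then Outcome.L else Outcome.R) = lrOutcome S hS from rfl] at hlr
    by_cases hterm : ∃ s ∈ S, s ≤ n
    · rw [if_pos hterm] at hlr
      set T : Set Outcome :=
        {o | ∃ s, ∃ _ : s ∈ S, ∃ _ : s ≤ n, o = lrOutcome S hS (n - s)} with hT
      -- T nonempty
      obtain ⟨s0, hs0, hs0n⟩ := hterm
      have hTne : lrOutcome S hS (n - s0) ∈ T := ⟨s0, hs0, hs0n, rfl⟩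
      constructor
      · -- P case: fromOptions T = P means T = {N}
        intro hP hN
        rw [hlr] at hP
        unfold fromOptions at hP
        split_ifs at hP with h1 h2 h3
        -- only the T = {N} branch gives P
        rw [normalN_iff] at hN
        obtain ⟨s, hs, hsn, hnot⟩ := hN
        have hmem : lrOutcome S hS (n - s) ∈ T := ⟨s, hs, hsn, rfl⟩
        rw [h3] at hmem
        have := (ih (n - s) (by have := hS s hs; omega)).2 hmem
        exact hnot this
      · -- N case
        intro hNout
        rw [hlr] at hNout
        unfold fromOptions at hNout
        split_ifs at hNout with h1 h2 h3
        -- we're in the else branch: ¬h1, ¬h2, ¬h3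
        -- Cases on whether P ∈ T or R ∈ T
        by_cases hPT : Outcome.P ∈ T
        · obtain ⟨s, hs, hsn, hso⟩ := hPT
          have := (ih (n - s) (by have := hS s hs; omega)).1 hso.symm
          exact (normalN_iff S hS n).mpr ⟨s, hs, hsn, this⟩
        by_cases hRT : Outcome.R ∈ T
        · obtain ⟨s, hs, hsn, hso⟩ := hRT
          have := hRP (n - s) hso.symm
          exact (normalN_iff S hS n).mpr ⟨s, hs, hsn, this⟩
        -- else: R ∉ T, P ∉ T. Then L ∉ T (else h1 would hold), so T ⊆ {N}, T = {N}, contra h3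
        exfalso
        have hLT : Outcome.L ∉ T := by
          intro hL
          exact h1 ⟨hL, fun o ho => by
            cases o with
            | L => exact Or.inl rfl
            | N => exact Or.inr rfl
            | R => exact absurd ho hRT
            | P => exact absurd ho hPT⟩
        apply h3
        apply Set.eq_singleton_iff_nonempty_unique_mem.mpr
        refine ⟨⟨_, hTne⟩, fun o ho => ?_⟩
        cases o with
        | N => rfl
        | L => exact absurd ho hLT
        | R => exact absurd ho hRT
        | P => exact absurd ho hPT
    · -- terminal: lrOutcome is L or R, never P or N; and normalN is false
      rw [if_neg hterm] at hlr
      constructor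
      · intro hP
        rw [hlr] at hP
        split_ifs at hP
      · intro hN
        rw [hlr] at hN
        split_ifs at hN
  exact ⟨fun n => (key n).1, fun n => (key n).2⟩
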